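/- arXiv:2107.06663 — 3 statements merged into one kernel-verified Lean document; each statement's English description precedes it below -/
import Mathlib

section
/- Let u_1,...,u_T be i.i.d. ℝ²-valued random vectors with independent components, where u_{t1} has Pareto-like tails of index α ∈ (1,2) with mean zero and u_{t2} has mean zero and finite variance σ₂². Assume T^{-2/α} Σ_{t=1}^T u_{t1}² converges in distribution to an a.s. positive random variable S. Let e_t = B u_t with B = [[B_{11}, B_{12}], [b_{21}/T^θ, B_{22}]], θ = 1/α − 1/2, B invertible with B_{11} ≠ 0. Then the sample correlation coefficient c_T = (Σ_t e_{t1} e_{t2}) / (Σ_t e_{t1}²) converges to 0 in probability. -/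
open MeasureTheory ProbabilityTheory Filter Topology BoundedContinuousFunction

/-!
With `A_T = ∑ u_{t1}²`, `Q_T = ∑ u_{t2}²` and `X_T = ∑ u_{t1} u_{t2}`, both sums in `c_T` are
quadratic forms in `(A_T, X_T, Q_T)`. The a.s. positive distributional limit of `T^{-2/α} A_T`
keeps `A_T` above `δ T^{2/α}` with high probability, while Markov's inequality keeps `Q_T` below
`L T`; as `2/α > 1`, `Q_T / A_T → 0` in probability, and then `X_T / A_T → 0` by Cauchy–Schwarz
(`X_T² ≤ A_T Q_T`). After dividing by `A_T`, `c_T` is a function of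
`(b₂₁ / T^θ, X_T / A_T, Q_T / A_T)` that is continuous at the origin, where it vanishes because
the denominator there is `B₁₁² ≠ 0`.
-/

lemma exists_pos_abs_div_lt_of_sq_le_mul {B11 : ℝ} (B12 B22 : ℝ) (hB11 : B11 ≠ 0) {ε : ℝ}
    (hε : 0 < ε) :
    ∃ κ > 0, ∀ t a b c : ℝ, |t| < κ → 0 < a → b ≤ κ * a → c ^ 2 ≤ a * b →
      |(B11 * t * a + (B11 * B22 + B12 * t) * c + B12 * B22 * b) /
        (B11 ^ 2 * a + 2 * B11 * B12 * c + B12 ^ 2 * b)| < ε := by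
  set F : ℝ × ℝ × ℝ → ℝ := fun p =>
    (B11 * p.1 + (B11 * B22 + B12 * p.1) * p.2.1 + B12 * B22 * p.2.2) /
      (B11 ^ 2 + 2 * B11 * B12 * p.2.1 + B12 ^ 2 * p.2.2)
  have hF : ContinuousAt F 0 := ContinuousAt.div (by fun_prop) (by fun_prop) (by simp [hB11])
  obtain ⟨κ₀, hκ₀, hF_lt⟩ := Metric.continuousAt_iff.1 hF ε hε
  refine ⟨min (κ₀ / 2) (κ₀ ^ 2 / 2), by positivity, fun t a b c ht ha hb hc => ?_⟩
  have hκ₁ := min_le_left (κ₀ / 2) (κ₀ ^ 2 / 2)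
  have hκ₂ := min_le_right (κ₀ / 2) (κ₀ ^ 2 / 2)
  have hb0 : 0 ≤ b := nonneg_of_mul_nonneg_right ((sq_nonneg c).trans hc) ha
  have hr : b / a < κ₀ := by rw [div_lt_iff₀ ha]; nlinarith
  have hx : |c / a| < κ₀ := by
    refine abs_lt_of_sq_lt_sq ?_ hκ₀.le
    have hab : a * b ≤ a * (κ₀ ^ 2 / 2 * a) :=
      mul_le_mul_of_nonneg_left (hb.trans (mul_le_mul_of_nonneg_right hκ₂ ha.le)) ha.le
    rw [div_pow, div_lt_iff₀ (by positivity)]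
    nlinarith [pow_pos hκ₀ 2, pow_pos ha 2]
  have hdist : dist (t, c / a, b / a) 0 < κ₀ := by
    simp only [Prod.dist_eq, Prod.fst_zero, Prod.snd_zero, Real.dist_0_eq_abs, max_lt_iff,
      abs_of_nonneg (div_nonneg hb0 ha.le)]
    exact ⟨by linarith, hx, hr⟩
  have hratio : (B11 * t * a + (B11 * B22 + B12 * t) * c + B12 * B22 * b) /
      (B11 ^ 2 * a + 2 * B11 * B12 * c + B12 ^ 2 * b) = F (t, c / a, b / a) := by
    simp only [F]
    field_simp
  rw [hratio]
  simpa [F, Real.dist_eq, abs_div] using hF_lt hdist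

lemma sum_lincomb_mul_lincomb {ι : Type*} (s : Finset ι) (x y : ι → ℝ) (a b c d : ℝ) :
    ∑ i ∈ s, (a * x i + b * y i) * (c * x i + d * y i) =
      a * c * ∑ i ∈ s, x i ^ 2 + (a * d + b * c) * ∑ i ∈ s, x i * y i +
        b * d * ∑ i ∈ s, y i ^ 2 := by
  simp only [Finset.mul_sum, ← Finset.sum_add_distrib]
  exact Finset.sum_congr rfl fun _ _ => by ring

lemma sum_lincomb_sq {ι : Type*} (s : Finset ι) (x y : ι → ℝ) (a b : ℝ) :
    ∑ i ∈ s, (a * x i + b * y i) ^ 2 =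
      a ^ 2 * ∑ i ∈ s, x i ^ 2 + 2 * a * b * ∑ i ∈ s, x i * y i + b ^ 2 * ∑ i ∈ s, y i ^ 2 := by
  simp only [Finset.mul_sum, ← Finset.sum_add_distrib]
  exact Finset.sum_congr rfl fun _ _ => by ring

section
variable {Ω : Type*} [MeasurableSpace Ω] {P : Measure Ω}

lemma exists_pos_measureReal_le_lt_of_ae_pos [IsFiniteMeasure P] {S : Ω → ℝ}
    (hS : Measurable S) (hSpos : ∀ᵐ ω ∂P, 0 < S ω) {η : ℝ} (hη : 0 < η) :
    ∃ δ > 0, P.real {ω | S ω ≤ δ} < η := by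
  have hinter : ⋂ r > (0 : ℝ), {ω | S ω ≤ r} = {ω | S ω ≤ 0} := by
    ext ω
    simp only [Set.mem_ofPred_eq, Set.mem_iInter]
    exact ⟨le_of_forall_gt_imp_ge_of_dense, fun h r hr => h.trans hr.le⟩
  have hlim := tendsto_measure_biInter_gt (μ := P) (s := fun r => {ω | S ω ≤ r}) (a := (0 : ℝ))
    (fun r _ => (hS measurableSet_Iic).nullMeasurableSet)
    (fun i j _ hij ω hω => le_trans hω hij) ⟨1, one_pos, measure_ne_top _ _⟩
  have hnull : P {ω | S ω ≤ 0} = 0 := by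
    rw [ae_iff] at hSpos
    simpa only [not_lt] using hSpos
  rw [hinter, hnull] at hlim
  obtain ⟨δ, hδη, hδ⟩ :=
    ((hlim.eventually (gt_mem_nhds (ENNReal.ofReal_pos.2 hη))).and self_mem_nhdsWithin).exists
  exact ⟨δ, hδ, ENNReal.toReal_lt_of_lt_ofReal hδη⟩

lemma eventually_measureReal_le_lt_of_tendsto_integral [IsFiniteMeasure P] {Y : ℕ → Ω → ℝ}
    {S : Ω → ℝ} (hY : ∀ T, Measurable (Y T)) (hS : Measurable S)
    (hconv : ∀ f : ℝ →ᵇ ℝ,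
      Tendsto (fun T => ∫ ω, f (Y T ω) ∂P) atTop (𝓝 (∫ ω, f (S ω) ∂P)))
    {a b η : ℝ} (hab : a < b) (hS_lt : P.real {ω | S ω < b} < η) :
    ∀ᶠ T in atTop, P.real {ω | Y T ω ≤ a} < η := by
  obtain ⟨g, hg_zero, hg_one, hg_mem⟩ := exists_bounded_zero_one_of_closed isClosed_Ici isClosed_Iic
    (Set.Ici_disjoint_Iic.2 hab.not_ge)
  have hg_int : ∀ Z : Ω → ℝ, Measurable Z → Integrable (fun ω => g (Z ω)) P := fun Z hZ =>
    (integrable_const (1 : ℝ)).mono' (g.continuous.measurable.comp hZ).aestronglyMeasurable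
      (ae_of_all _ fun ω => by
        rw [Real.norm_eq_abs, abs_le]; exact ⟨by linarith [(hg_mem (Z ω)).1], (hg_mem (Z ω)).2⟩)
  have hSb : MeasurableSet {ω | S ω < b} := hS measurableSet_Iio
  have hS_le : ∫ ω, g (S ω) ∂P ≤ P.real {ω | S ω < b} := by
    rw [← integral_indicator_one hSb]
    refine integral_mono (hg_int S hS) ((integrable_const 1).indicator hSb) fun ω => ?_
    by_cases h : S ω < b
    · simpa [Set.indicator_of_mem (show ω ∈ {ω | S ω < b} from h)] using (hg_mem (S ω)).2
    · simp [Set.indicator_of_notMem (show ω ∉ {ω | S ω < b} from h), hg_zero (not_lt.1 h)]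
  filter_upwards [(hconv g).eventually_lt_const (hS_le.trans_lt hS_lt)] with T hT
  have hYa : MeasurableSet {ω | Y T ω ≤ a} := hY T measurableSet_Iic
  refine lt_of_le_of_lt ?_ hT
  rw [← integral_indicator_one hYa]
  refine integral_mono ((integrable_const 1).indicator hYa) (hg_int (Y T) (hY T)) fun ω => ?_
  by_cases h : Y T ω ≤ a
  · simp [Set.indicator_of_mem (show ω ∈ {ω | Y T ω ≤ a} from h), hg_one h]
  · simpa [Set.indicator_of_notMem (show ω ∉ {ω | Y T ω ≤ a} from h)] using (hg_mem (Y T ω)).1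

lemma exists_pos_eventually_measureReal_le_lt [IsFiniteMeasure P] {Y : ℕ → Ω → ℝ} {S : Ω → ℝ}
    (hY : ∀ T, Measurable (Y T)) (hS : Measurable S) (hSpos : ∀ᵐ ω ∂P, 0 < S ω)
    (hconv : ∀ f : ℝ →ᵇ ℝ,
      Tendsto (fun T => ∫ ω, f (Y T ω) ∂P) atTop (𝓝 (∫ ω, f (S ω) ∂P)))
    {η : ℝ} (hη : 0 < η) : ∃ δ > 0, ∀ᶠ T in atTop, P.real {ω | Y T ω ≤ δ} < η := by
  obtain ⟨δ, hδ, hSδ⟩ := exists_pos_measureReal_le_lt_of_ae_pos hS hSpos hη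
  refine ⟨δ / 2, half_pos hδ, eventually_measureReal_le_lt_of_tendsto_integral hY hS hconv
    (half_lt_self hδ) (lt_of_le_of_lt (measureReal_mono fun ω (hω : S ω < δ) => hω.le) hSδ)⟩

lemma exists_eventually_measureReal_mul_le_sum_lt [IsFiniteMeasure P] {Z : ℕ → Ω → ℝ}
    (hZ : ∀ t, IdentDistrib (Z t) (Z 0) P P) (hZ0 : ∀ t ω, 0 ≤ Z t ω) (hint : Integrable (Z 0) P)
    {η : ℝ} (hη : 0 < η) :
    ∃ L, ∀ᶠ T : ℕ in atTop, P.real {ω | L * T ≤ ∑ t ∈ Finset.range T, Z t ω} < η := by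
  set m := ∫ ω, Z 0 ω ∂P
  have hm : 0 ≤ m := integral_nonneg (hZ0 0)
  have hint_t : ∀ t, Integrable (Z t) P := fun t => (hZ t).integrable_iff.2 hint
  refine ⟨(m + 1) / η, ?_⟩
  filter_upwards [eventually_gt_atTop 0] with T hT
  have hT' : (0 : ℝ) < T := Nat.cast_pos.2 hT
  have hsum : ∫ ω, ∑ t ∈ Finset.range T, Z t ω ∂P = T * m := by
    rw [integral_finsetSum _ fun t _ => hint_t t]
    simp [(hZ _).integral_eq, m]
  have hmarkov := mul_meas_ge_le_integral_of_nonneg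
    (ae_of_all P fun ω => Finset.sum_nonneg fun t _ => hZ0 t ω)
    (integrable_finsetSum (Finset.range T) fun t _ => hint_t t) ((m + 1) / η * T)
  rw [hsum] at hmarkov
  by_contra! hp
  have := mul_le_mul_of_nonneg_left hp (by positivity : 0 ≤ (m + 1) / η * T)
  rw [mul_right_comm, div_mul_cancel₀ _ hη.ne'] at this
  nlinarith

lemma tendsto_measureReal_not_pos_and_le_mul [IsFiniteMeasure P] {A Q : ℕ → Ω → ℝ} {ρ : ℝ}
    (hρ : 1 < ρ)
    (hA : ∀ η > 0, ∃ δ > 0, ∀ᶠ T : ℕ in atTop, P.real {ω | (T : ℝ) ^ (-ρ) * A T ω ≤ δ} < η)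
    (hQ : ∀ η > 0, ∃ L, ∀ᶠ T : ℕ in atTop, P.real {ω | L * T ≤ Q T ω} < η)
    {κ : ℝ} (hκ : 0 < κ) :
    Tendsto (fun T => P.real {ω | ¬ (0 < A T ω ∧ Q T ω ≤ κ * A T ω)}) atTop (𝓝 0) := by
  refine tendsto_order.2 ⟨fun a ha => Eventually.of_forall fun T => ha.trans_le measureReal_nonneg,
    fun η hη => ?_⟩
  obtain ⟨δ, hδ, hAδ⟩ := hA (η / 2) (half_pos hη)
  obtain ⟨L, hQL⟩ := hQ (η / 2) (half_pos hη)
  have hgrowth : ∀ᶠ T : ℕ in atTop, L / (κ * δ) < (T : ℝ) ^ (ρ - 1) :=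
    ((tendsto_rpow_atTop (sub_pos.2 hρ)).comp tendsto_natCast_atTop_atTop).eventually_gt_atTop _
  filter_upwards [hAδ, hQL, hgrowth, eventually_gt_atTop 0] with T hA_T hQ_T hgrowth_T hT
  have hT' : (0 : ℝ) < T := Nat.cast_pos.2 hT
  have hLT : L * T < κ * δ * (T : ℝ) ^ ρ := by
    rw [Real.rpow_sub_one hT'.ne', lt_div_iff₀ hT', div_mul_eq_mul_div,
      div_lt_iff₀ (by positivity)] at hgrowth_T
    linarith
  have hsub : {ω | ¬ (0 < A T ω ∧ Q T ω ≤ κ * A T ω)} ⊆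
      {ω | (T : ℝ) ^ (-ρ) * A T ω ≤ δ} ∪ {ω | L * T ≤ Q T ω} := by
    intro ω hω
    by_contra h
    simp only [Set.mem_union, Set.mem_ofPred_eq, not_or, not_le] at h hω
    obtain ⟨hA', hQ'⟩ := h
    rw [Real.rpow_neg hT'.le, inv_mul_eq_div, lt_div_iff₀ (by positivity)] at hA'
    have hApos : 0 < A T ω := lt_of_le_of_lt (by positivity) hA'
    exact hω ⟨hApos, by nlinarith⟩
  calc P.real {ω | ¬ (0 < A T ω ∧ Q T ω ≤ κ * A T ω)}
      ≤ P.real {ω | (T : ℝ) ^ (-ρ) * A T ω ≤ δ} + P.real {ω | L * T ≤ Q T ω} :=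
        (measureReal_mono hsub).trans (measureReal_union_le _ _)
    _ < η := by linarith

lemma tendstoInMeasure_quadratic_ratio_zero [IsFiniteMeasure P] {A Q X : ℕ → Ω → ℝ}
    {t : ℕ → ℝ} {B11 : ℝ} (B12 B22 : ℝ) (hB11 : B11 ≠ 0)
    (ht : Tendsto t atTop (𝓝 0)) (hCS : ∀ T ω, X T ω ^ 2 ≤ A T ω * Q T ω)
    (hAQ : ∀ κ > 0,
      Tendsto (fun T => P.real {ω | ¬ (0 < A T ω ∧ Q T ω ≤ κ * A T ω)}) atTop (𝓝 0)) :
    TendstoInMeasure P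
      (fun T ω => (B11 * t T * A T ω + (B11 * B22 + B12 * t T) * X T ω + B12 * B22 * Q T ω) /
        (B11 ^ 2 * A T ω + 2 * B11 * B12 * X T ω + B12 ^ 2 * Q T ω))
      atTop (fun _ => 0) := by
  refine tendstoInMeasure_iff_measureReal_dist.2 fun ε hε => ?_
  obtain ⟨κ, hκ, hratio⟩ := exists_pos_abs_div_lt_of_sq_le_mul B12 B22 hB11 hε
  refine squeeze_zero' (Eventually.of_forall fun T => measureReal_nonneg) ?_ (hAQ κ hκ)
  filter_upwards [Metric.tendsto_nhds.1 ht κ hκ] with T hT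
  refine measureReal_mono fun ω hω hgood => ?_
  simp only [Set.mem_ofPred_eq, Real.dist_0_eq_abs] at hω hT
  exact hω.not_gt (hratio _ _ _ _ hT hgood.1 hgood.2 (hCS T ω))

end

theorem sample_correlation_tendsto_zero_general
    {Ω : Type*} [MeasurableSpace Ω] (P : Measure Ω) [IsProbabilityMeasure P]
    (u1 u2 : ℕ → Ω → ℝ) (hmeas1 : ∀ t, Measurable (u1 t)) (hmeas2 : ∀ t, Measurable (u2 t))
    (hident : ∀ t : ℕ, Measure.map (fun ω => (u1 t ω, u2 t ω)) P =
      Measure.map (fun ω => (u1 0 ω, u2 0 ω)) P)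
    -- tail and moment assumptions
    (α : ℝ) (hα₁ : 1 < α) (hα₂ : α < 2)
    (σ₂ : ℝ) (hσ₂ : 0 < σ₂) (hvar2 : ∫ ω, (u2 0 ω) ^ 2 ∂P = σ₂ ^ 2)
    -- convergence in distribution of the normalized sum of squares to an a.s. positive limit
    (S : Ω → ℝ) (hSmeas : Measurable S) (hSpos : ∀ᵐ ω ∂P, 0 < S ω)
    (hconv : ∀ f : ℝ →ᵇ ℝ,
      Tendsto (fun T : ℕ =>
          ∫ ω, f ((T : ℝ) ^ (-(2 / α)) * ∑ t ∈ Finset.range T, (u1 t ω) ^ 2) ∂P)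
        atTop (𝓝 (∫ ω, f (S ω) ∂P)))
    -- the mixing matrix
    (B11 B12 b21 B22 θ : ℝ) (hθ : θ = 1 / α - 1 / 2) (hB11 : B11 ≠ 0) :
    TendstoInMeasure P
      (fun T ω =>
        (∑ t ∈ Finset.range T,
            (B11 * u1 t ω + B12 * u2 t ω) *
              (b21 / (T : ℝ) ^ θ * u1 t ω + B22 * u2 t ω)) /
          ∑ t ∈ Finset.range T, (B11 * u1 t ω + B12 * u2 t ω) ^ 2)
      atTop (fun _ => 0) := by
  have hα : 0 < α := by linarith
  have hθpos : 0 < θ := by rw [hθ, sub_pos]; exact one_div_lt_one_div_of_lt hα hα₂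
  have ht : Tendsto (fun T : ℕ => b21 / (T : ℝ) ^ θ) atTop (𝓝 0) :=
    ((tendsto_rpow_atTop hθpos).comp tendsto_natCast_atTop_atTop).const_div_atTop b21
  have hA := fun η (hη : 0 < η) => exists_pos_eventually_measureReal_le_lt
    (fun T => (Finset.measurable_sum _ fun t _ => (hmeas1 t).pow_const 2).const_mul _)
    hSmeas hSpos hconv hη
  have hident2 : ∀ t, IdentDistrib (fun ω => u2 t ω ^ 2) (fun ω => u2 0 ω ^ 2) P P := fun t =>
    (IdentDistrib.mk ((hmeas1 t).prodMk (hmeas2 t)).aemeasurable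
      ((hmeas1 0).prodMk (hmeas2 0)).aemeasurable (hident t)).comp (measurable_snd.pow_const 2)
  have hQ := fun η (hη : 0 < η) => exists_eventually_measureReal_mul_le_sum_lt hident2
    (fun t ω => sq_nonneg (u2 t ω)) (Integrable.of_integral_ne_zero (by rw [hvar2]; positivity)) hη
  simp only [sum_lincomb_mul_lincomb, sum_lincomb_sq]
  exact tendstoInMeasure_quadratic_ratio_zero B12 B22 hB11 ht
    (fun T ω => Finset.sum_mul_sq_le_sq_mul_sq _ _ _)
    (fun κ hκ => tendsto_measureReal_not_pos_and_le_mul ((one_lt_div hα).2 hα₂) hA hQ hκ)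

/-- Choleski prewhitening lemma: in the heavy-light model the sample regression
coefficient `c_T = Σ e_{t1} e_{t2} / Σ e_{t1}²` converges to zero in probability. -/
theorem sample_correlation_tendsto_zero
    {Ω : Type*} [MeasurableSpace Ω] (P : Measure Ω) [IsProbabilityMeasure P]
    (u1 u2 : ℕ → Ω → ℝ) (hmeas1 : ∀ t, Measurable (u1 t)) (hmeas2 : ∀ t, Measurable (u2 t))
    -- iid across time with independent components
    (hiid : iIndepFun (fun t ω => (u1 t ω, u2 t ω)) P)
    (hident : ∀ t : ℕ, Measure.map (fun ω => (u1 t ω, u2 t ω)) P =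
      Measure.map (fun ω => (u1 0 ω, u2 0 ω)) P)
    (hcomp : ∀ t, IndepFun (u1 t) (u2 t) P)
    -- tail and moment assumptions
    (α C : ℝ) (hα₁ : 1 < α) (hα₂ : α < 2) (hC : 0 < C)
    (htail : Tendsto (fun x : ℝ => x ^ α * (P {ω | |u1 0 ω| > x}).toReal) atTop (𝓝 C))
    (hmean1 : ∫ ω, u1 0 ω ∂P = 0) (hmean2 : ∫ ω, u2 0 ω ∂P = 0)
    (σ₂ : ℝ) (hσ₂ : 0 < σ₂) (hvar2 : ∫ ω, (u2 0 ω) ^ 2 ∂P = σ₂ ^ 2)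
    -- convergence in distribution of the normalized sum of squares to an a.s. positive limit
    (S : Ω → ℝ) (hSmeas : Measurable S) (hSpos : ∀ᵐ ω ∂P, 0 < S ω)
    (hconv : ∀ f : ℝ →ᵇ ℝ,
      Tendsto (fun T : ℕ =>
          ∫ ω, f ((T : ℝ) ^ (-(2 / α)) * ∑ t ∈ Finset.range T, (u1 t ω) ^ 2) ∂P)
        atTop (𝓝 (∫ ω, f (S ω) ∂P)))
    -- the mixing matrix
    (B11 B12 b21 B22 θ : ℝ) (hθ : θ = 1 / α - 1 / 2) (hB11 : B11 ≠ 0)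
    (hBinv : ∀ T : ℕ, 0 < T → B11 * B22 - B12 * (b21 / (T : ℝ) ^ θ) ≠ 0) :
    TendstoInMeasure P
      (fun T ω =>
        (∑ t ∈ Finset.range T,
            (B11 * u1 t ω + B12 * u2 t ω) *
              (b21 / (T : ℝ) ^ θ * u1 t ω + B22 * u2 t ω)) /
          ∑ t ∈ Finset.range T, (B11 * u1 t ω + B12 * u2 t ω) ^ 2)
      atTop (fun _ => 0) :=
  sample_correlation_tendsto_zero_general P u1 u2 hmeas1 hmeas2 hident α hα₁ hα₂ σ₂ hσ₂ hvar2 S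
    hSmeas hSpos hconv B11 B12 b21 B22 θ hθ hB11
end

section
/- Let {u_t} be i.i.d. ℝ²-valued with independent components, u_{t1} heavy-tailed with index α ∈ (1,2), E u_{t1} = 0, and u_{t2} mean zero with unit variance. Suppose (T^{-1/α} Σ_{t=1}^T u_{t1}, T^{-1/2} Σ_{t=1}^T u_{t2}) converges jointly in distribution to (S_u, N_u) with S_u and N_u independent. Let Y_{t2} = T^{-θ} Σ_{j≥0} c_{j,21} u_{t−j,1} + Σ_{j≥0} c_{j,22} u_{t−j,2} with θ = 1/α − 1/2 and coefficients c_{j,2i} (depending on T) converging to limits c*_{j,2i} summably and exponentially decaying in j. Then T^{-1/2} Σ_{t=1}^T Y_{t2} converges in distribution to (Σ_j c*_{j,21}) S_u + (Σ_j c*_{j,22}) N_u. -/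
open MeasureTheory ProbabilityTheory Filter Topology BoundedContinuousFunction
open Finset
open scoped ENNReal

/-!
Summation by parts (the Beveridge–Nelson decomposition): for a summable filter `c`,
`∑_{t<T} ∑_j c_j u_{t-j} = (∑_j c_j) ∑_{t<T} u_t + ∑_j c_j ∑_{i<j} (u_{-i-1} - u_{T-i-1})`.
At lag `j` the remainder involves only `2j` innovations, so its `L¹` norm is at most
`2 E|u_0| ∑_j j |c_j|`, bounded uniformly in `T` under exponential decay; the heavy-tailed
innovation has a finite first moment because `α > 1`. As `T^{-1/2} T^{-θ} = T^{-1/α}`, the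
normalized sample sum is `(∑_j c_{j,21}) T^{-1/α} ∑_t u_{t1} + (∑_j c_{j,22}) T^{-1/2} ∑_t u_{t2}`
up to an `L¹`-negligible error. The coefficient sums converge by dominated convergence, and
Slutsky's theorem gives the limit.
-/

lemma sum_range_comp_sub_sub_sum_range {M : Type*} [AddCommGroup M] (f : ℤ → M) (T j : ℕ) :
    ∑ t ∈ range T, f (t - j) - ∑ t ∈ range T, f t
      = ∑ i ∈ range j, (f (-(i + 1)) - f (T - (i + 1))) := by
  have hlag (t : ℤ) : f (t - j) - f t = ∑ i ∈ range j, (f (t - (i + 1)) - f (t - i)) := by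
    simpa [add_comm, sub_add_eq_sub_sub] using (sum_range_sub (fun i : ℕ => f (t - i)) j).symm
  have hlead (i : ℕ) :
      ∑ t ∈ range T, (f (t - (i + 1)) - f (t - i)) = f (-(i + 1)) - f (T - (i + 1)) := by
    refine Eq.trans (sum_congr rfl fun t _ => ?_) (sum_range_sub' (fun t : ℕ => f (t - (i + 1))) T)
    push_cast
    ring_nf
  rw [← sum_sub_distrib]
  simp_rw [hlag]
  rw [sum_comm]
  exact sum_congr rfl fun i _ => hlead i

noncomputable def movingAverageRemainder (c : ℕ → ℝ) (x : ℤ → ℝ) (T : ℕ) : ℝ :=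
  ∑ t ∈ range T, ∑' j : ℕ, c j * x (t - j) - (∑' j, c j) * ∑ t ∈ range T, x t

lemma movingAverageRemainder_eq_tsum {c : ℕ → ℝ} {x : ℤ → ℝ} {T : ℕ} (hc : Summable c)
    (hx : ∀ t ∈ range T, Summable fun j : ℕ => c j * x (t - j)) :
    movingAverageRemainder c x T
      = ∑' j : ℕ, c j * ∑ i ∈ range j, (x (-(i + 1)) - x (T - (i + 1))) := by
  rw [movingAverageRemainder, ← Summable.tsum_finsetSum hx, ← tsum_mul_right,
    ← (summable_sum hx).tsum_sub (hc.mul_right _)]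
  refine tsum_congr fun j => ?_
  rw [← mul_sum, ← mul_sub, sum_range_comp_sub_sub_sum_range (M := ℝ)]

lemma rpow_mul_sum_sub_eq_movingAverageRemainder {α θ : ℝ} (hθ : θ = 1 / α - 1 / 2)
    (c₁ c₂ : ℕ → ℝ) (x₁ x₂ : ℤ → ℝ) (T : ℕ) :
    (T : ℝ) ^ (-(1 / 2 : ℝ)) * ∑ t ∈ range T,
        ((T : ℝ) ^ (-θ) * ∑' j : ℕ, c₁ j * x₁ (t - j) + ∑' j : ℕ, c₂ j * x₂ (t - j))
      - ((∑' j, c₁ j) * ((T : ℝ) ^ (-(1 / α)) * ∑ t ∈ range T, x₁ t)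
        + (∑' j, c₂ j) * ((T : ℝ) ^ (-(1 / 2 : ℝ)) * ∑ t ∈ range T, x₂ t))
      = (T : ℝ) ^ (-(1 / α)) * movingAverageRemainder c₁ x₁ T
        + (T : ℝ) ^ (-(1 / 2 : ℝ)) * movingAverageRemainder c₂ x₂ T := by
  rcases T.eq_zero_or_pos with rfl | hT
  · simp [movingAverageRemainder]
  have hsplit : (T : ℝ) ^ (-(1 / α)) = (T : ℝ) ^ (-(1 / 2 : ℝ)) * (T : ℝ) ^ (-θ) := by
    rw [← Real.rpow_add (by positivity), hθ]
    ring_nf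
  rw [hsplit, movingAverageRemainder, movingAverageRemainder, sum_add_distrib, ← mul_sum]
  ring

lemma tsum_natCast_mul_enorm_le_of_abs_le_geometric {c : ℕ → ℝ} {K ρ : ℝ} (hρ₀ : 0 ≤ ρ)
    (hρ₁ : ρ < 1) (hc : ∀ j, |c j| ≤ K * ρ ^ j) :
    ∑' j : ℕ, (j : ℝ≥0∞) * ‖c j‖ₑ ≤ ENNReal.ofReal (K * ∑' j : ℕ, j * ρ ^ j) := by
  have hnonneg (j : ℕ) : 0 ≤ j * (K * ρ ^ j) :=
    mul_nonneg j.cast_nonneg ((abs_nonneg _).trans (hc j))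
  have hsummable : Summable fun j : ℕ => j * (K * ρ ^ j) := by
    simpa [mul_left_comm] using
      (summable_pow_mul_geometric_of_norm_lt_one 1 (by rwa [Real.norm_of_nonneg hρ₀])).mul_left K
  calc ∑' j : ℕ, (j : ℝ≥0∞) * ‖c j‖ₑ
      ≤ ∑' j : ℕ, ENNReal.ofReal (j * (K * ρ ^ j)) := ENNReal.tsum_le_tsum fun j => by
        rw [ENNReal.ofReal_mul j.cast_nonneg, ENNReal.ofReal_natCast, Real.enorm_eq_ofReal_abs]
        gcongr
        exact hc j
    _ = ENNReal.ofReal (K * ∑' j : ℕ, j * ρ ^ j) := by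
        rw [← ENNReal.ofReal_tsum_of_nonneg hnonneg hsummable, ← tsum_mul_left]
        exact congrArg _ (tsum_congr fun j => by ring)

section

variable {Ω Ω' : Type*} [MeasurableSpace Ω] [MeasurableSpace Ω'] {μ : Measure Ω}
  {μ' : Measure Ω'} {u : ℤ → Ω → ℝ} {m : ℝ≥0∞}

@[fun_prop]
lemma aemeasurable_movingAverageRemainder (hu : ∀ t, AEMeasurable (u t) μ) (c : ℕ → ℝ) (T : ℕ) :
    AEMeasurable (fun ω => movingAverageRemainder c (fun t => u t ω) T) μ := by
  unfold movingAverageRemainder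
  fun_prop

lemma ae_summable_mul_of_lintegral_enorm_le {v : ℕ → Ω → ℝ} (hv : ∀ j, AEMeasurable (v j) μ)
    (hm : ∀ j, ∫⁻ ω, ‖v j ω‖ₑ ∂μ ≤ m) (hm_top : m ≠ ∞) {c : ℕ → ℝ} (hc : Summable c) :
    ∀ᵐ ω ∂μ, Summable fun j => c j * v j ω := by
  have hcu : ∀ j, AEStronglyMeasurable (fun ω => c j * v j ω) μ :=
    fun j => ((hv j).const_mul (c j)).aestronglyMeasurable
  refine (summable_norm_of_tsum_eLpNorm_ne_top le_rfl hcu ?_).mono fun ω hω => hω.of_norm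
  refine ne_top_of_le_ne_top (ENNReal.mul_ne_top
    (tsum_enorm_ne_top_iff_summable_norm.2 hc.norm) hm_top) ?_
  rw [← ENNReal.tsum_mul_right]
  refine ENNReal.tsum_le_tsum fun j => ?_
  simp only [eLpNorm_one_eq_lintegral_enorm, enorm_mul]
  rw [lintegral_const_mul'' _ (hv j).enorm]
  gcongr
  exact hm j

lemma lintegral_enorm_sum_range_sub_le (hu : ∀ t, AEMeasurable (u t) μ)
    (hm : ∀ t, ∫⁻ ω, ‖u t ω‖ₑ ∂μ ≤ m) (a b : ℕ → ℤ) (n : ℕ) :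
    ∫⁻ ω, ‖∑ i ∈ range n, (u (a i) ω - u (b i) ω)‖ₑ ∂μ ≤ n * (2 * m) := by
  calc ∫⁻ ω, ‖∑ i ∈ range n, (u (a i) ω - u (b i) ω)‖ₑ ∂μ
      ≤ ∫⁻ ω, ∑ i ∈ range n, (‖u (a i) ω‖ₑ + ‖u (b i) ω‖ₑ) ∂μ :=
        lintegral_mono fun ω => (enorm_sum_le _ _).trans (sum_le_sum fun i _ => enorm_sub_le)
    _ = ∑ i ∈ range n, (∫⁻ ω, ‖u (a i) ω‖ₑ ∂μ + ∫⁻ ω, ‖u (b i) ω‖ₑ ∂μ) := by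
        rw [lintegral_finsetSum' _ fun i _ => by fun_prop]
        exact sum_congr rfl fun i _ => lintegral_add_left' (hu _).enorm _
    _ ≤ ∑ i ∈ range n, 2 * m :=
        sum_le_sum fun i _ => (add_le_add (hm _) (hm _)).trans_eq (two_mul m).symm
    _ = n * (2 * m) := by rw [sum_const, card_range, nsmul_eq_mul]

lemma lintegral_enorm_movingAverageRemainder_le (hu : ∀ t, AEMeasurable (u t) μ)
    (hm : ∀ t, ∫⁻ ω, ‖u t ω‖ₑ ∂μ ≤ m) (hm_top : m ≠ ∞) {c : ℕ → ℝ} (hc : Summable c) (T : ℕ) :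
    ∫⁻ ω, ‖movingAverageRemainder c (fun s => u s ω) T‖ₑ ∂μ ≤ 2 * m * ∑' j : ℕ, j * ‖c j‖ₑ := by
  let D : ℕ → Ω → ℝ := fun j ω => ∑ i ∈ range j, (u (-(i + 1)) ω - u (T - (i + 1)) ω)
  have hD_meas (j : ℕ) : AEMeasurable (D j) μ :=
    Finset.aemeasurable_fun_sum _ fun i _ => (hu _).sub (hu _)
  have hsummable : ∀ᵐ ω ∂μ, ∀ t : ℕ, Summable fun j : ℕ => c j * u (t - j) ω :=
    ae_all_iff.2 fun t => ae_summable_mul_of_lintegral_enorm_le (v := fun j => u (t - j))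
      (fun _ => hu _) (fun _ => hm _) hm_top hc
  calc ∫⁻ ω, ‖movingAverageRemainder c (fun s => u s ω) T‖ₑ ∂μ
      = ∫⁻ ω, ‖∑' j, c j * D j ω‖ₑ ∂μ :=
        lintegral_congr_ae <| hsummable.mono fun ω h =>
          congrArg _ (movingAverageRemainder_eq_tsum hc fun t _ => h t)
    _ ≤ ∫⁻ ω, ∑' j, ‖c j‖ₑ * ‖D j ω‖ₑ ∂μ :=
        lintegral_mono fun ω => enorm_tsum_le_tsum_enorm.trans_eq (by simp only [enorm_mul])
    _ = ∑' j, ‖c j‖ₑ * ∫⁻ ω, ‖D j ω‖ₑ ∂μ := by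
        rw [lintegral_tsum fun j => (hD_meas j).enorm.const_mul _]
        exact tsum_congr fun j => lintegral_const_mul'' _ (hD_meas j).enorm
    _ ≤ ∑' j : ℕ, ‖c j‖ₑ * (j * (2 * m)) := by
        gcongr with j
        exact lintegral_enorm_sum_range_sub_le hu hm _ _ j
    _ = 2 * m * ∑' j : ℕ, j * ‖c j‖ₑ := by
        rw [← ENNReal.tsum_mul_left]
        exact tsum_congr fun j => by ring

lemma tendsto_lintegral_enorm_mul_of_lintegral_enorm_le {ι : Type*} {l : Filter ι}
    {s : ι → ℝ} (hs : Tendsto s l (𝓝 0)) {R : ι → Ω → ℝ} (hR : ∀ i, AEMeasurable (R i) μ)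
    {B : ℝ≥0∞} (hB : B ≠ ∞) (hRB : ∀ i, ∫⁻ ω, ‖R i ω‖ₑ ∂μ ≤ B) :
    Tendsto (fun i => ∫⁻ ω, ‖s i * R i ω‖ₑ ∂μ) l (𝓝 0) := by
  have hlim : Tendsto (fun i => ‖s i‖ₑ * B) l (𝓝 0) := by
    convert ENNReal.Tendsto.mul_const (by simpa using hs.enorm) (Or.inr hB)
    exact (zero_mul B).symm
  refine tendsto_of_tendsto_of_tendsto_of_le_of_le tendsto_const_nhds hlim (fun _ => zero_le)
    fun i => ?_
  simp only [enorm_mul]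
  rw [lintegral_const_mul'' _ (hR i).enorm]
  gcongr
  exact hRB i

lemma tendsto_lintegral_enorm_mul_movingAverageRemainder (hu : ∀ t, AEMeasurable (u t) μ)
    (hm : ∀ t, ∫⁻ ω, ‖u t ω‖ₑ ∂μ ≤ m) (hm_top : m ≠ ∞) {c : ℕ → ℕ → ℝ} {K ρ : ℝ} (hρ₀ : 0 ≤ ρ)
    (hρ₁ : ρ < 1) (hc : ∀ T j, |c T j| ≤ K * ρ ^ j) {s : ℕ → ℝ} (hs : Tendsto s atTop (𝓝 0)) :
    Tendsto (fun T => ∫⁻ ω, ‖s T * movingAverageRemainder (c T) (fun t => u t ω) T‖ₑ ∂μ)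
      atTop (𝓝 0) := by
  have hgeom : Summable fun j : ℕ => K * ρ ^ j :=
    (summable_geometric_of_lt_one hρ₀ hρ₁).mul_left K
  refine tendsto_lintegral_enorm_mul_of_lintegral_enorm_le hs
    (fun T => aemeasurable_movingAverageRemainder hu (c T) T)
    (B := 2 * m * ENNReal.ofReal (K * ∑' j : ℕ, j * ρ ^ j)) (by finiteness) fun T => ?_
  refine (lintegral_enorm_movingAverageRemainder_le hu hm hm_top
    (hgeom.of_norm_bounded (hc T)) T).trans ?_
  gcongr
  exact tsum_natCast_mul_enorm_le_of_abs_le_geometric hρ₀ hρ₁ (hc T)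

lemma tendstoInMeasure_add_of_tendsto_lintegral_enorm {ι : Type*} {l : Filter ι}
    {f g : ι → Ω → ℝ} (hf : ∀ i, AEMeasurable (f i) μ) (hg : ∀ i, AEMeasurable (g i) μ)
    (hf0 : Tendsto (fun i => ∫⁻ ω, ‖f i ω‖ₑ ∂μ) l (𝓝 0))
    (hg0 : Tendsto (fun i => ∫⁻ ω, ‖g i ω‖ₑ ∂μ) l (𝓝 0)) :
    TendstoInMeasure μ (fun i => f i + g i) l 0 := by
  refine tendstoInMeasure_of_tendsto_eLpNorm one_ne_zero
    (fun i => ((hf i).add (hg i)).aestronglyMeasurable) aestronglyMeasurable_const ?_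
  refine tendsto_of_tendsto_of_tendsto_of_le_of_le tendsto_const_nhds (by simpa using hf0.add hg0)
    (fun _ => zero_le) fun i => ?_
  rw [sub_zero, eLpNorm_one_eq_lintegral_enorm, ← lintegral_add_left' (hf i).enorm]
  exact lintegral_mono fun ω => enorm_add_le _ _

lemma lintegral_enorm_lt_top_of_meas_lt_le_rpow [IsFiniteMeasure μ] {v : Ω → ℝ}
    (hv : AEMeasurable v μ) {α K x₀ : ℝ} (hα : 1 < α) (hx₀ : 0 < x₀)
    (htail : ∀ x, x₀ < x → μ {ω | x < |v ω|} ≤ ENNReal.ofReal (K * x ^ (-α))) :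
    ∫⁻ ω, ‖v ω‖ₑ ∂μ < ∞ := by
  simp_rw [← ofReal_norm, Real.norm_eq_abs]
  rw [lintegral_eq_lintegral_meas_lt μ (ae_of_all _ fun ω => abs_nonneg _) hv.abs,
    ← Set.Ioc_union_Ioi_eq_Ioi hx₀.le, lintegral_union measurableSet_Ioi Set.Ioc_disjoint_Ioi_same]
  refine ENNReal.add_lt_top.2 ⟨?_, ?_⟩
  · calc ∫⁻ x in Set.Ioc 0 x₀, μ {ω | x < |v ω|}
        ≤ ∫⁻ _ in Set.Ioc 0 x₀, μ Set.univ := setLIntegral_mono' measurableSet_Ioc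
          fun _ _ => measure_mono (Set.subset_univ _)
      _ < ∞ := by
          rw [setLIntegral_const, Real.volume_Ioc]
          exact ENNReal.mul_lt_top (measure_lt_top _ _) ENNReal.ofReal_lt_top
  · calc ∫⁻ x in Set.Ioi x₀, μ {ω | x < |v ω|}
        ≤ ∫⁻ x in Set.Ioi x₀, ENNReal.ofReal (K * x ^ (-α)) :=
          setLIntegral_mono' measurableSet_Ioi htail
      _ < ∞ := ((integrableOn_Ioi_rpow_of_lt (by linarith) hx₀).const_mul K).lintegral_lt_top

lemma lintegral_enorm_lt_top_of_tendsto_rpow_mul_meas [IsFiniteMeasure μ] {v : Ω → ℝ}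
    (hv : AEMeasurable v μ) {α C : ℝ} (hα : 1 < α)
    (htail : Tendsto (fun x : ℝ => x ^ α * (μ {ω | |v ω| > x}).toReal) atTop (𝓝 C)) :
    ∫⁻ ω, ‖v ω‖ₑ ∂μ < ∞ := by
  obtain ⟨x₀, hx₀⟩ := eventually_atTop.1 (htail.eventually_lt_const (lt_add_one C))
  refine lintegral_enorm_lt_top_of_meas_lt_le_rpow hv hα (x₀ := max x₀ 1)
    (lt_max_of_lt_right one_pos) (K := C + 1) fun x hx => ?_
  have hx_pos : 0 < x := (lt_max_of_lt_right one_pos).trans hx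
  have hbound := hx₀ x ((le_max_left _ _).trans hx.le)
  rw [ENNReal.le_ofReal_iff_toReal_le (measure_ne_top _ _)
    (mul_nonneg ((mul_nonneg (by positivity) ENNReal.toReal_nonneg).trans hbound.le)
      (by positivity)), Real.rpow_neg hx_pos.le,
    ← div_eq_mul_inv, le_div_iff₀ (by positivity), mul_comm]
  exact hbound.le

lemma tendstoInDistribution_iff_tendsto_integral {ι E : Type*} [TopologicalSpace E]
    [MeasurableSpace E] [OpensMeasurableSpace E] [IsProbabilityMeasure μ]
    [IsProbabilityMeasure μ'] {l : Filter ι} {X : ι → Ω → E} {Z : Ω' → E}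
    (hX : ∀ i, AEMeasurable (X i) μ) (hZ : AEMeasurable Z μ') :
    TendstoInDistribution X l Z (fun _ => μ) μ' ↔
      ∀ f : E →ᵇ ℝ, Tendsto (fun i => ∫ ω, f (X i ω) ∂μ) l (𝓝 (∫ ω, f (Z ω) ∂μ')) := by
  have hlaw (f : E →ᵇ ℝ) :
      (fun i => ∫ x, f x ∂(μ.map (X i))) = (fun i => ∫ ω, f (X i ω) ∂μ) ∧
        ∫ x, f x ∂(μ'.map Z) = ∫ ω, f (Z ω) ∂μ' :=
    ⟨funext fun i => integral_map (hX i) f.continuous.aestronglyMeasurable,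
      integral_map hZ f.continuous.aestronglyMeasurable⟩
  refine ⟨fun h f => ?_, fun h => ⟨hX, hZ, ?_⟩⟩
  · have := ProbabilityMeasure.tendsto_iff_forall_integral_tendsto.1 h.tendsto f
    simpa only [ProbabilityMeasure.coe_mk, (hlaw f).1, (hlaw f).2] using this
  · refine ProbabilityMeasure.tendsto_iff_forall_integral_tendsto.2 fun f => ?_
    simpa only [ProbabilityMeasure.coe_mk, (hlaw f).1, (hlaw f).2] using h f

lemma MeasureTheory.TendstoInDistribution.mul_add_mul [IsProbabilityMeasure μ]
    [IsProbabilityMeasure μ'] {X Y : ℕ → Ω → ℝ} {Z W : Ω' → ℝ}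
    (h : TendstoInDistribution (fun n ω => (X n ω, Y n ω)) atTop (fun ω => (Z ω, W ω))
      (fun _ => μ) μ')
    {a b : ℕ → ℝ} {a₀ b₀ : ℝ} (ha : Tendsto a atTop (𝓝 a₀)) (hb : Tendsto b atTop (𝓝 b₀)) :
    TendstoInDistribution (fun n ω => a n * X n ω + b n * Y n ω) atTop
      (fun ω => a₀ * Z ω + b₀ * W ω) (fun _ => μ) μ' :=
  h.continuous_comp_prodMk_of_tendstoInMeasure_const
    (g := fun p : (ℝ × ℝ) × (ℝ × ℝ) => p.2.1 * p.1.1 + p.2.2 * p.1.2) (by fun_prop)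
    (Y := fun n _ => (a n, b n))
    (tendstoInMeasure_of_tendsto_ae (fun _ => aestronglyMeasurable_const)
      (ae_of_all _ fun _ => ha.prodMk_nhds hb))
    fun _ => aemeasurable_const

end

theorem hl_sample_mean_convergence_general
    {Ω : Type*} [MeasurableSpace Ω] (P : Measure Ω) [IsProbabilityMeasure P]
    (u1 u2 : ℤ → Ω → ℝ) (hmeas1 : ∀ t, Measurable (u1 t)) (hmeas2 : ∀ t, Measurable (u2 t))
    (hident : ∀ t : ℤ, Measure.map (fun ω => (u1 t ω, u2 t ω)) P =
      Measure.map (fun ω => (u1 0 ω, u2 0 ω)) P)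
    (α C : ℝ) (hα₁ : 1 < α)
    (htail : Tendsto (fun x : ℝ => x ^ α * (P {ω | |u1 0 ω| > x}).toReal) atTop (𝓝 C))
    (hvar2 : ∫ ω, (u2 0 ω) ^ 2 ∂P = 1)
    (θ : ℝ) (hθ : θ = 1 / α - 1 / 2)
    -- joint convergence in distribution of the normalized partial sums to (S_u, N_u)
    (Su Nu : Ω → ℝ) (hSu : Measurable Su) (hNu : Measurable Nu)
    (hjoint : ∀ f : (ℝ × ℝ) →ᵇ ℝ,
      Tendsto (fun T : ℕ =>
          ∫ ω, f ((T : ℝ) ^ (-(1 / α)) * ∑ t ∈ Finset.range T, u1 (t : ℤ) ω,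
                  (T : ℝ) ^ (-(1 / 2 : ℝ)) * ∑ t ∈ Finset.range T, u2 (t : ℤ) ω) ∂P)
        atTop (𝓝 (∫ ω, f (Su ω, Nu ω) ∂P)))
    -- coefficients, their limits, and uniform exponential decay
    (c21 c22 : ℕ → ℕ → ℝ) (c21s c22s : ℕ → ℝ)
    (hlim21 : ∀ j, Tendsto (fun T => c21 T j) atTop (𝓝 (c21s j)))
    (hlim22 : ∀ j, Tendsto (fun T => c22 T j) atTop (𝓝 (c22s j)))
    (K ρ : ℝ) (hρ₀ : 0 < ρ) (hρ₁ : ρ < 1)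
    (hdecay21 : ∀ T j, |c21 T j| ≤ K * ρ ^ j)
    (hdecay22 : ∀ T j, |c22 T j| ≤ K * ρ ^ j) :
    ∀ f : ℝ →ᵇ ℝ,
      Tendsto (fun T : ℕ =>
          ∫ ω, f ((T : ℝ) ^ (-(1 / 2 : ℝ)) *
            ∑ t ∈ Finset.range T,
              ((T : ℝ) ^ (-θ) * ∑' j : ℕ, c21 T j * u1 ((t : ℤ) - (j : ℤ)) ω +
                ∑' j : ℕ, c22 T j * u2 ((t : ℤ) - (j : ℤ)) ω)) ∂P)
        atTop
        (𝓝 (∫ ω, f ((∑' j : ℕ, c21s j) * Su ω + (∑' j : ℕ, c22s j) * Nu ω) ∂P)) := by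
  intro f
  have hlaw (t : ℤ) :
      IdentDistrib (fun ω => (u1 t ω, u2 t ω)) (fun ω => (u1 0 ω, u2 0 ω)) P P :=
    ⟨by fun_prop, by fun_prop, hident t⟩
  have hm1 (t : ℤ) : ∫⁻ ω, ‖u1 t ω‖ₑ ∂P ≤ ∫⁻ ω, ‖u1 0 ω‖ₑ ∂P :=
    ((hlaw t).comp measurable_fst.enorm).lintegral_eq.le
  have hm2 (t : ℤ) : ∫⁻ ω, ‖u2 t ω‖ₑ ∂P ≤ ∫⁻ ω, ‖u2 0 ω‖ₑ ∂P :=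
    ((hlaw t).comp measurable_snd.enorm).lintegral_eq.le
  have hm1_top : ∫⁻ ω, ‖u1 0 ω‖ₑ ∂P ≠ ∞ :=
    (lintegral_enorm_lt_top_of_tendsto_rpow_mul_meas (hmeas1 0).aemeasurable hα₁ htail).ne
  -- a non-integrable function has integral `0`, so `hvar2` forces square-integrability
  have hm2_top : ∫⁻ ω, ‖u2 0 ω‖ₑ ∂P ≠ ∞ :=
    (((memLp_two_iff_integrable_sq (hmeas2 0).aestronglyMeasurable).2
      (Integrable.of_integral_ne_zero (hvar2 ▸ one_ne_zero))).integrable one_le_two).2.ne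
  have hgeom : Summable fun j : ℕ => K * ρ ^ j :=
    (summable_geometric_of_lt_one hρ₀.le hρ₁).mul_left K
  have hlin := ((tendstoInDistribution_iff_tendsto_integral (by fun_prop) (by fun_prop)).2
    hjoint).mul_add_mul
      (tendsto_tsum_of_dominated_convergence hgeom hlim21 (.of_forall (hdecay21 ·)))
      (tendsto_tsum_of_dominated_convergence hgeom hlim22 (.of_forall (hdecay22 ·)))
  refine (tendstoInDistribution_iff_tendsto_integral (by fun_prop) (by fun_prop)).1
    (tendstoInDistribution_of_tendstoInMeasure_sub _ _ hlin ?_ (by fun_prop)) f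
  have hrpow (a : ℝ) (ha : 0 < a) : Tendsto (fun T : ℕ => (T : ℝ) ^ (-a)) atTop (𝓝 0) :=
    (tendsto_rpow_neg_atTop ha).comp tendsto_natCast_atTop_atTop
  convert tendstoInMeasure_add_of_tendsto_lintegral_enorm (by fun_prop) (by fun_prop)
    (tendsto_lintegral_enorm_mul_movingAverageRemainder (fun t => (hmeas1 t).aemeasurable) hm1
      hm1_top hρ₀.le hρ₁ hdecay21 (hrpow (1 / α) (by positivity)))
    (tendsto_lintegral_enorm_mul_movingAverageRemainder (fun t => (hmeas2 t).aemeasurable) hm2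
      hm2_top hρ₀.le hρ₁ hdecay22 (hrpow (1 / 2) (by norm_num))) using 1
  funext T ω
  simp only [Pi.sub_apply, Pi.add_apply]
  exact rpow_mul_sum_sub_eq_movingAverageRemainder hθ (c21 T) (c22 T) (u1 · ω) (u2 · ω) T

/-- Sample-mean convergence for the finite-variance variable in the heavy-light model:
`T^{-1/2} Σ_t Y_{t2}` converges in distribution to
`(Σ_j c*_{j,21}) S_u + (Σ_j c*_{j,22}) N_u`. -/
theorem hl_sample_mean_convergence
    {Ω : Type*} [MeasurableSpace Ω] (P : Measure Ω) [IsProbabilityMeasure P]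
    (u1 u2 : ℤ → Ω → ℝ) (hmeas1 : ∀ t, Measurable (u1 t)) (hmeas2 : ∀ t, Measurable (u2 t))
    (hiid : iIndepFun (fun t ω => (u1 t ω, u2 t ω)) P)
    (hident : ∀ t : ℤ, Measure.map (fun ω => (u1 t ω, u2 t ω)) P =
      Measure.map (fun ω => (u1 0 ω, u2 0 ω)) P)
    (hcomp : ∀ t, IndepFun (u1 t) (u2 t) P)
    (α C : ℝ) (hα₁ : 1 < α) (hα₂ : α < 2) (hC : 0 < C)
    (htail : Tendsto (fun x : ℝ => x ^ α * (P {ω | |u1 0 ω| > x}).toReal) atTop (𝓝 C))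
    (hmean1 : ∫ ω, u1 0 ω ∂P = 0) (hmean2 : ∫ ω, u2 0 ω ∂P = 0)
    (hvar2 : ∫ ω, (u2 0 ω) ^ 2 ∂P = 1)
    (θ : ℝ) (hθ : θ = 1 / α - 1 / 2)
    -- joint convergence in distribution of the normalized partial sums to (S_u, N_u)
    (Su Nu : Ω → ℝ) (hSu : Measurable Su) (hNu : Measurable Nu)
    (hSuNu : IndepFun Su Nu P)
    (hjoint : ∀ f : (ℝ × ℝ) →ᵇ ℝ,
      Tendsto (fun T : ℕ =>
          ∫ ω, f ((T : ℝ) ^ (-(1 / α)) * ∑ t ∈ Finset.range T, u1 (t : ℤ) ω,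
                  (T : ℝ) ^ (-(1 / 2 : ℝ)) * ∑ t ∈ Finset.range T, u2 (t : ℤ) ω) ∂P)
        atTop (𝓝 (∫ ω, f (Su ω, Nu ω) ∂P)))
    -- coefficients, their limits, and uniform exponential decay
    (c21 c22 : ℕ → ℕ → ℝ) (c21s c22s : ℕ → ℝ)
    (hlim21 : ∀ j, Tendsto (fun T => c21 T j) atTop (𝓝 (c21s j)))
    (hlim22 : ∀ j, Tendsto (fun T => c22 T j) atTop (𝓝 (c22s j)))
    (K ρ : ℝ) (hK : 0 < K) (hρ₀ : 0 < ρ) (hρ₁ : ρ < 1)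
    (hdecay21 : ∀ T j, |c21 T j| ≤ K * ρ ^ j)
    (hdecay22 : ∀ T j, |c22 T j| ≤ K * ρ ^ j) :
    ∀ f : ℝ →ᵇ ℝ,
      Tendsto (fun T : ℕ =>
          ∫ ω, f ((T : ℝ) ^ (-(1 / 2 : ℝ)) *
            ∑ t ∈ Finset.range T,
              ((T : ℝ) ^ (-θ) * ∑' j : ℕ, c21 T j * u1 ((t : ℤ) - (j : ℤ)) ω +
                ∑' j : ℕ, c22 T j * u2 ((t : ℤ) - (j : ℤ)) ω)) ∂P)
        atTop
        (𝓝 (∫ ω, f ((∑' j : ℕ, c21s j) * Su ω + (∑' j : ℕ, c22s j) * Nu ω) ∂P)) :=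
  hl_sample_mean_convergence_general P u1 u2 hmeas1 hmeas2 hident α C hα₁ htail hvar2 θ hθ Su Nu hSu
    hNu hjoint c21 c22 c21s c22s hlim21 hlim22 K ρ hρ₀ hρ₁ hdecay21 hdecay22
end

section
/- Let R be an invertible n×n real matrix. The Amari distance expression (1/(2n)) Σ_i (Σ_j |r_{ij}|/max_j |r_{ij}| − 1) + (1/(2n)) Σ_j (Σ_i |r_{ij}|/max_i |r_{ij}| − 1) equals zero if and only if R has exactly one nonzero entry in each row and each column, i.e., R = PΛ for a permutation matrix P and invertible diagonal Λ. -/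
/-!
Every entry of a row is bounded by the row's maximum modulus, so `∑ⱼ |rᵢⱼ| / maxⱼ |rᵢⱼ| ≥ 1`,
with equality exactly when the row has a single nonzero entry; the same holds for columns.
Invertibility rules out zero rows and columns, so the Amari expression is a positive multiple
of a sum of nonnegative terms and vanishes iff every row and every column has exactly one
nonzero entry. The columns of those entries then form a permutation of the rows.
-/

/-- The Amari distance expression evaluated at a matrix `R`. -/
noncomputable def amariExpr {n : ℕ} (R : Matrix (Fin n) (Fin n) ℝ) : ℝ :=
  (1 / (2 * (n : ℝ))) * ∑ i, ((∑ j, |R i j|) / (⨆ j, |R i j|) - 1) +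
    (1 / (2 * (n : ℝ))) * ∑ j, ((∑ i, |R i j|) / (⨆ i, |R i j|) - 1)

open Finset
open scoped Matrix

section Vector

variable {ι : Type*} [Fintype ι]

lemma iSup_le_sum_of_nonneg {f : ι → ℝ} (hf : 0 ≤ f) : ⨆ j, f j ≤ ∑ j, f j := by
  cases isEmpty_or_nonempty ι
  · simp
  · exact ciSup_le fun j => single_le_sum (fun i _ => hf i) (mem_univ j)

lemma sum_eq_iSup_iff_existsUnique {f : ι → ℝ} (hf : 0 ≤ f) (hf0 : f ≠ 0) :
    ∑ j, f j = ⨆ j, f j ↔ ∃! j, f j ≠ 0 := by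
  classical
  obtain ⟨j₀, hj₀⟩ := Function.ne_iff.1 hf0
  have : Nonempty ι := ⟨j₀⟩
  obtain ⟨k, hk⟩ := exists_eq_ciSup_of_finite (f := f)
  have hle : ∀ j, f j ≤ f k := fun j => hk ▸ le_ciSup (Finite.bddAbove_range f) j
  have hk0 : f k ≠ 0 := fun h => hj₀ ((hle j₀).trans h.le |>.antisymm (hf j₀))
  rw [← hk, ← add_sum_erase _ _ (mem_univ k), add_eq_left,
    sum_eq_zero_iff_of_nonneg fun j _ => hf j]
  constructor
  · intro hzero
    refine ⟨k, hk0, fun j hj => ?_⟩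
    by_contra hjk
    exact hj (hzero j (mem_erase.2 ⟨hjk, mem_univ j⟩))
  · rintro ⟨j, -, huniq⟩ i hi
    by_contra hi0
    exact (mem_erase.1 hi).1 ((huniq i hi0).trans (huniq k hk0).symm)

lemma iSup_abs_pos {v : ι → ℝ} (hv : v ≠ 0) : 0 < ⨆ j, |v j| := by
  obtain ⟨j, hj⟩ := Function.ne_iff.1 hv
  exact (abs_pos.2 hj).trans_le (le_ciSup (f := fun j => |v j|) (Finite.bddAbove_range _) j)

lemma one_le_sum_abs_div_iSup_abs {v : ι → ℝ} (hv : v ≠ 0) :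
    1 ≤ (∑ j, |v j|) / ⨆ j, |v j| :=
  (one_le_div (iSup_abs_pos hv)).2 (iSup_le_sum_of_nonneg fun j => abs_nonneg (v j))

lemma sum_abs_div_iSup_abs_eq_one_iff {v : ι → ℝ} (hv : v ≠ 0) :
    (∑ j, |v j|) / ⨆ j, |v j| = 1 ↔ ∃! j, v j ≠ 0 := by
  have habs : (fun j => |v j|) ≠ 0 := fun h => hv (funext fun j => abs_eq_zero.1 (congrFun h j))
  rw [div_eq_one_iff_eq (iSup_abs_pos hv).ne',
    sum_eq_iSup_iff_existsUnique (fun j => abs_nonneg (v j)) habs]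
  simp only [ne_eq, abs_eq_zero]

end Vector

lemma existsUnique_ne_zero_iff_eq_perm_diag {ι α : Type*} [Finite ι] [DecidableEq ι] [Zero α]
    {R : Matrix ι ι α} :
    ((∀ i, ∃! j, R i j ≠ 0) ∧ ∀ j, ∃! i, R i j ≠ 0) ↔
      ∃ (σ : Equiv.Perm ι) (d : ι → α), (∀ i, d i ≠ 0) ∧
        R = Matrix.of fun i j => if j = σ i then d i else 0 := by
  constructor
  · rintro ⟨hrow, hcol⟩
    choose σ hσ hσ_uniq using hrow
    have hinj : Function.Injective σ := fun i₁ i₂ h =>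
      (hcol (σ i₁)).unique (hσ i₁) (h ▸ hσ i₂)
    refine ⟨Equiv.ofBijective σ (Finite.injective_iff_bijective.1 hinj), fun i => R i (σ i),
      hσ, ?_⟩
    ext i j
    by_cases hj : j = σ i
    · simp [hj]
    · simp only [Matrix.of_apply, Equiv.ofBijective_apply, if_neg hj]
      exact not_not.1 fun h => hj (hσ_uniq i j h)
  · rintro ⟨σ, d, hd, rfl⟩
    refine ⟨fun i => ⟨σ i, by simp [hd], fun j hj => ?_⟩,
      fun j => ⟨σ.symm j, by simp [hd], fun i hi => ?_⟩⟩
    · simp only [Matrix.of_apply, ne_eq, ite_eq_right_iff, not_forall] at hj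
      exact hj.1
    · simp only [Matrix.of_apply, ne_eq, ite_eq_right_iff, not_forall] at hi
      exact σ.eq_symm_apply.2 hi.1.symm

lemma amariExpr_eq_zero_iff_existsUnique {n : ℕ} {R : Matrix (Fin n) (Fin n) ℝ}
    (hrow : ∀ i, R i ≠ 0) (hcol : ∀ j, Rᵀ j ≠ 0) :
    amariExpr R = 0 ↔ (∀ i, ∃! j, R i j ≠ 0) ∧ ∀ j, ∃! i, R i j ≠ 0 := by
  rcases Nat.eq_zero_or_pos n with rfl | hn
  · simp [amariExpr]
  have hrow_nonneg : ∀ i, 0 ≤ (∑ j, |R i j|) / (⨆ j, |R i j|) - 1 := fun i =>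
    sub_nonneg.2 (one_le_sum_abs_div_iSup_abs (hrow i))
  have hcol_nonneg : ∀ j, 0 ≤ (∑ i, |R i j|) / (⨆ i, |R i j|) - 1 := fun j =>
    sub_nonneg.2 (one_le_sum_abs_div_iSup_abs (hcol j))
  rw [amariExpr, ← mul_add, mul_eq_zero, or_iff_right (by positivity),
    add_eq_zero_iff_of_nonneg (sum_nonneg fun i _ => hrow_nonneg i)
      (sum_nonneg fun j _ => hcol_nonneg j),
    sum_eq_zero_iff_of_nonneg fun i _ => hrow_nonneg i,
    sum_eq_zero_iff_of_nonneg fun j _ => hcol_nonneg j]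
  simp only [mem_univ, true_imp_iff, sub_eq_zero]
  exact and_congr (forall_congr' fun i => sum_abs_div_iSup_abs_eq_one_iff (hrow i))
    (forall_congr' fun j => sum_abs_div_iSup_abs_eq_one_iff (hcol j))

theorem amariExpr_eq_zero_iff_general (n : ℕ)
    (R : Matrix (Fin n) (Fin n) ℝ) (hR : IsUnit R.det) :
    amariExpr R = 0 ↔
      ∃ (σ : Equiv.Perm (Fin n)) (d : Fin n → ℝ), (∀ i, d i ≠ 0) ∧
        R = Matrix.of fun i j => if j = σ i then d i else 0 := by
  have hrow : ∀ i, R i ≠ 0 := fun i h =>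
    hR.ne_zero (Matrix.det_eq_zero_of_row_eq_zero i (congrFun h))
  have hcol : ∀ j, Rᵀ j ≠ 0 := fun j h =>
    hR.ne_zero (Matrix.det_eq_zero_of_column_eq_zero j (congrFun h))
  rw [amariExpr_eq_zero_iff_existsUnique hrow hcol, existsUnique_ne_zero_iff_eq_perm_diag]

/-- The Amari expression of an invertible matrix `R` vanishes iff `R` has exactly one
nonzero entry in each row and column, i.e. `R = PΛ` with `P` a permutation matrix and
`Λ` invertible diagonal. -/
theorem amariExpr_eq_zero_iff (n : ℕ) (hn : 0 < n)
    (R : Matrix (Fin n) (Fin n) ℝ) (hR : IsUnit R.det) :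
    amariExpr R = 0 ↔
      ∃ (σ : Equiv.Perm (Fin n)) (d : Fin n → ℝ), (∀ i, d i ≠ 0) ∧
        R = Matrix.of fun i j => if j = σ i then d i else 0 :=
  amariExpr_eq_zero_iff_general n R hR
end
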